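/- Let H be a quasitriangular Hopf algebra over a commutative ring k with R-matrix R. Then (S ⊗ S)(R) = R, where S is the antipode applied to both tensor factors. -/

import Mathlib

/-! Contracting the middle factor of either hexagon identity with the counit shows
`(id ⊗ ε)(R) = 1 = (ε ⊗ id)(R)`. Contracting it instead with the antipode, i.e. applying
`x ⊗ y ⊗ z ↦ S(x) y ⊗ z` to `(Δ ⊗ id)(R) = R₁₃ R₂₃` and `x ⊗ y ⊗ z ↦ x ⊗ y S(z)` to
`(id ⊗ Δ)(R⁻¹) = R₁₂⁻¹ R₁₃⁻¹`, turns the antipode axiom into `(S ⊗ id)(R) R = 1` and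
`R⁻¹ (id ⊗ S)(R⁻¹) = 1`. Hence `(S ⊗ S)(R) = (id ⊗ S)(R⁻¹) = R`. -/

open TensorProduct

variable (k : Type*) [CommRing k] (H : Type*) [Ring H] [HopfAlgebra k H]

/-- `R ⊗ 1` in `H ⊗ H ⊗ H`. -/
noncomputable def leg12 : H ⊗[k] H →ₐ[k] H ⊗[k] (H ⊗[k] H) :=
  Algebra.TensorProduct.map (AlgHom.id k H) Algebra.TensorProduct.includeLeft

/-- `R` with legs in factors 1 and 3. -/
noncomputable def leg13 : H ⊗[k] H →ₐ[k] H ⊗[k] (H ⊗[k] H) :=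
  Algebra.TensorProduct.map (AlgHom.id k H) Algebra.TensorProduct.includeRight

/-- `1 ⊗ R` in `H ⊗ H ⊗ H`. -/
noncomputable def leg23 : H ⊗[k] H →ₐ[k] H ⊗[k] (H ⊗[k] H) :=
  Algebra.TensorProduct.includeRight

/-- `id ⊗ Δ`. -/
noncomputable def idComul : H ⊗[k] H →ₐ[k] H ⊗[k] (H ⊗[k] H) :=
  Algebra.TensorProduct.map (AlgHom.id k H) (Bialgebra.comulAlgHom k H)

/-- `Δ ⊗ id` (landing in `H ⊗ (H ⊗ H)` via the associator). -/
noncomputable def comulId : H ⊗[k] H →ₐ[k] H ⊗[k] (H ⊗[k] H) :=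
  (Algebra.TensorProduct.assoc k k k H H H).toAlgHom.comp
    (Algebra.TensorProduct.map (Bialgebra.comulAlgHom k H) (AlgHom.id k H))

/-- The opposite comultiplication `Δᵒᵖ = τ ∘ Δ`. -/
noncomputable def comulOp : H →ₐ[k] H ⊗[k] H :=
  (Algebra.TensorProduct.comm k H H).toAlgHom.comp (Bialgebra.comulAlgHom k H)

noncomputable def unitCounit : H →ₐ[k] H :=
  (Algebra.ofId k H).comp (Bialgebra.counitAlgHom k H)

noncomputable def counitMiddle : H ⊗[k] (H ⊗[k] H) →ₐ[k] H ⊗[k] H :=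
  Algebra.TensorProduct.map (AlgHom.id k H)
    ((Algebra.TensorProduct.lid k H).toAlgHom.comp
      (Algebra.TensorProduct.map (Bialgebra.counitAlgHom k H) (AlgHom.id k H)))

section

variable {k H}

theorem counitMiddle_idComul (x : H ⊗[k] H) : counitMiddle k H (idComul k H x) = x := by
  induction x using TensorProduct.induction_on with
  | zero => simp
  | add x y hx hy => simp only [map_add, hx, hy]
  | tmul a b =>
    have hb : Algebra.TensorProduct.map (Bialgebra.counitAlgHom k H) (AlgHom.id k H)
        (Coalgebra.comul b) = 1 ⊗ₜ b := Coalgebra.rTensor_counit_comul b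
    simp [counitMiddle, idComul, hb]

theorem counitMiddle_assoc (w : H ⊗[k] H) (c : H) :
    counitMiddle k H (Algebra.TensorProduct.assoc k k k H H H (w ⊗ₜ c)) =
      Algebra.TensorProduct.rid k k H
        (Algebra.TensorProduct.map (AlgHom.id k H) (Bialgebra.counitAlgHom k H) w) ⊗ₜ c := by
  induction w using TensorProduct.induction_on with
  | zero => simp
  | add x y hx hy => simp only [add_tmul, map_add, hx, hy]
  | tmul a b => simp [counitMiddle, smul_tmul]

theorem counitMiddle_comulId (x : H ⊗[k] H) : counitMiddle k H (comulId k H x) = x := by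
  induction x using TensorProduct.induction_on with
  | zero => simp
  | add x y hx hy => simp only [map_add, hx, hy]
  | tmul a b =>
    have ha : Algebra.TensorProduct.map (AlgHom.id k H) (Bialgebra.counitAlgHom k H)
        (Coalgebra.comul a) = a ⊗ₜ 1 := Coalgebra.lTensor_counit_comul a
    simp [comulId, counitMiddle_assoc, ha]

theorem counitMiddle_leg13 (x : H ⊗[k] H) : counitMiddle k H (leg13 k H x) = x := by
  induction x using TensorProduct.induction_on with
  | zero => simp
  | add x y hx hy => simp only [map_add, hx, hy]
  | tmul a b => simp [counitMiddle, leg13]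

theorem counitMiddle_leg12 (x : H ⊗[k] H) :
    counitMiddle k H (leg12 k H x) =
      Algebra.TensorProduct.map (AlgHom.id k H) (unitCounit k H) x := by
  induction x using TensorProduct.induction_on with
  | zero => simp
  | add x y hx hy => simp only [map_add, hx, hy]
  | tmul a b => simp [counitMiddle, leg12, unitCounit, Algebra.algebraMap_eq_smul_one]

theorem counitMiddle_leg23 (x : H ⊗[k] H) :
    counitMiddle k H (leg23 k H x) =
      Algebra.TensorProduct.map (unitCounit k H) (AlgHom.id k H) x := by
  induction x using TensorProduct.induction_on with
  | zero => simp
  | add x y hx hy => simp only [map_add, hx, hy]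
  | tmul a b => simp [counitMiddle, leg23, unitCounit, Algebra.algebraMap_eq_smul_one, smul_tmul]


theorem map_id_unitCounit_eq_one (R : (H ⊗[k] H)ˣ)
    (hR : idComul k H R = leg13 k H R * leg12 k H R) :
    Algebra.TensorProduct.map (AlgHom.id k H) (unitCounit k H) R = 1 := by
  have h := congrArg (counitMiddle k H) hR
  rw [map_mul, counitMiddle_idComul, counitMiddle_leg13, counitMiddle_leg12] at h
  exact R.isUnit.mul_eq_left.mp h.symm

theorem map_unitCounit_id_eq_one (R : (H ⊗[k] H)ˣ)
    (hR : comulId k H R = leg13 k H R * leg23 k H R) :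
    Algebra.TensorProduct.map (unitCounit k H) (AlgHom.id k H) R = 1 := by
  have h := congrArg (counitMiddle k H) hR
  rw [map_mul, counitMiddle_comulId, counitMiddle_leg13, counitMiddle_leg23] at h
  exact R.isUnit.mul_eq_left.mp h.symm

theorem idComul_inv (R : (H ⊗[k] H)ˣ) (hR : idComul k H R = leg13 k H R * leg12 k H R) :
    idComul k H ↑R⁻¹ = leg12 k H ↑R⁻¹ * leg13 k H ↑R⁻¹ := by
  refine left_inv_eq_right_inv (a := idComul k H R) ?_ ?_
  · rw [← map_mul, R.inv_mul, map_one]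
  · rw [hR, mul_assoc, ← mul_assoc (leg12 k H R), ← map_mul, R.mul_inv, map_one, one_mul,
      ← map_mul, R.mul_inv, map_one]

end

noncomputable def lTensorMulAntipode : H ⊗[k] (H ⊗[k] H) →ₗ[k] H ⊗[k] H :=
  (LinearMap.mul' k H ∘ₗ (HopfAlgebra.antipode k).lTensor H).lTensor H

noncomputable def rTensorAntipodeMul : H ⊗[k] (H ⊗[k] H) →ₗ[k] H ⊗[k] H :=
  (LinearMap.mul' k H ∘ₗ (HopfAlgebra.antipode k).rTensor H).rTensor H ∘ₗ
    (TensorProduct.assoc k H H H).symm.toLinearMap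

section

variable {k H}

theorem lTensorMulAntipode_idComul (x : H ⊗[k] H) :
    lTensorMulAntipode k H (idComul k H x) =
      Algebra.TensorProduct.map (AlgHom.id k H) (unitCounit k H) x := by
  induction x using TensorProduct.induction_on with
  | zero => simp
  | add x y hx hy => simp only [map_add, hx, hy]
  | tmul a b => simp [lTensorMulAntipode, idComul, unitCounit]

theorem lTensorMulAntipode_leg12_mul_leg13 (u v : H ⊗[k] H) :
    lTensorMulAntipode k H (leg12 k H u * leg13 k H v) =
      u * TensorProduct.map LinearMap.id (HopfAlgebra.antipode k) v := by
  induction u using TensorProduct.induction_on with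
  | zero => simp
  | add x y hx hy => simp only [map_add, add_mul, hx, hy]
  | tmul a b =>
    induction v using TensorProduct.induction_on with
    | zero => simp
    | add x y hx hy => simp only [map_add, mul_add, hx, hy]
    | tmul c d => simp [lTensorMulAntipode, leg12, leg13]

theorem rTensorAntipodeMul_assoc (w : H ⊗[k] H) (c : H) :
    rTensorAntipodeMul k H (Algebra.TensorProduct.assoc k k k H H H (w ⊗ₜ c)) =
      LinearMap.mul' k H ((HopfAlgebra.antipode k).rTensor H w) ⊗ₜ c := by
  induction w using TensorProduct.induction_on with
  | zero => simp
  | add x y hx hy => simp only [add_tmul, map_add, hx, hy]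
  | tmul a b => simp [rTensorAntipodeMul]

theorem rTensorAntipodeMul_comulId (x : H ⊗[k] H) :
    rTensorAntipodeMul k H (comulId k H x) =
      Algebra.TensorProduct.map (unitCounit k H) (AlgHom.id k H) x := by
  induction x using TensorProduct.induction_on with
  | zero => simp
  | add x y hx hy => simp only [map_add, hx, hy]
  | tmul a b => simp [comulId, rTensorAntipodeMul_assoc, unitCounit]

theorem rTensorAntipodeMul_leg13_mul_leg23 (u v : H ⊗[k] H) :
    rTensorAntipodeMul k H (leg13 k H u * leg23 k H v) =
      TensorProduct.map (HopfAlgebra.antipode k) LinearMap.id u * v := by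
  induction u using TensorProduct.induction_on with
  | zero => simp
  | add x y hx hy => simp only [map_add, add_mul, hx, hy]
  | tmul a b =>
    induction v using TensorProduct.induction_on with
    | zero => simp
    | add x y hx hy => simp only [map_add, mul_add, hx, hy]
    | tmul c d => simp [rTensorAntipodeMul, leg13, leg23]

theorem map_id_antipode_inv_eq_self (R : (H ⊗[k] H)ˣ)
    (hR : idComul k H R = leg13 k H R * leg12 k H R) :
    TensorProduct.map LinearMap.id (HopfAlgebra.antipode k) (↑R⁻¹ : H ⊗[k] H) = R := by
  have hε : Algebra.TensorProduct.map (AlgHom.id k H) (unitCounit k H) ↑R⁻¹ = 1 := by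
    simpa only [map_mul, map_one, map_id_unitCounit_eq_one R hR, one_mul] using
      congrArg (Algebra.TensorProduct.map (AlgHom.id k H) (unitCounit k H)) R.mul_inv
  have h := congrArg (lTensorMulAntipode k H) (idComul_inv R hR)
  rw [lTensorMulAntipode_idComul, lTensorMulAntipode_leg12_mul_leg13, hε] at h
  exact (Units.inv_mul_eq_one.mp h.symm).symm

theorem map_antipode_id_eq_inv (R : (H ⊗[k] H)ˣ)
    (hR : comulId k H R = leg13 k H R * leg23 k H R) :
    TensorProduct.map (HopfAlgebra.antipode k) LinearMap.id (R : H ⊗[k] H) = ↑R⁻¹ := by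
  have h := congrArg (rTensorAntipodeMul k H) hR
  rw [rTensorAntipodeMul_comulId, rTensorAntipodeMul_leg13_mul_leg23,
    map_unitCounit_id_eq_one R hR] at h
  exact Units.mul_eq_one_iff_eq_inv.mp h.symm

end

theorem stmt4
    (R R' : H ⊗[k] H)
    (hinv₁ : R * R' = 1) (hinv₂ : R' * R = 1)
    (hR₁ : idComul k H R = leg13 k H R * leg12 k H R)
    (hR₂ : comulId k H R = leg13 k H R * leg23 k H R) :
    TensorProduct.map (HopfAlgebra.antipode (R := k)) (HopfAlgebra.antipode (R := k)) R = R := by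
  let u : (H ⊗[k] H)ˣ := ⟨R, R', hinv₁, hinv₂⟩
  calc TensorProduct.map (HopfAlgebra.antipode k) (HopfAlgebra.antipode k) R
      = TensorProduct.map LinearMap.id (HopfAlgebra.antipode k)
          (TensorProduct.map (HopfAlgebra.antipode k) LinearMap.id R) := by
        rw [← LinearMap.comp_apply, ← TensorProduct.map_comp, LinearMap.id_comp, LinearMap.comp_id]
    _ = TensorProduct.map LinearMap.id (HopfAlgebra.antipode k) ↑u⁻¹ := by
        rw [map_antipode_id_eq_inv u hR₂]
    _ = R := map_id_antipode_inv_eq_self u hR₁
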